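/- Define on the vector space with basis {L_m : m ≥ −1} ∪ {Y_p : p ∈ ℤ + 1/2, p ≥ −1/2} ∪ {M_n : n ≥ 0} the brackets [L_m, L_n] = (m−n)L_{m+n}, [L_m, M_n] = ((2a−3)(m+1) − n)M_{m+n} + 2b M_{m+n+1}, [L_m, Y_p] = ((a−1)(m+1) − (p+1/2))Y_{m+p} + b Y_{m+p+1}, [Y_p, Y_q] = (p−q)M_{p+q}, [Y_p, M_n] = [M_m, M_n] = 0 (indices out of range understood as 0). Then these brackets satisfy the Jacobi identity. -/

import Mathlib

noncomputable section

/-- Index set of the annihilation algebra `Lie(TSV(a,b))⁺`: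
`L_m` for `m ∈ ℤ`, `m ≥ -1`; `Y_p` for `p ∈ ℤ + 1/2`, `p ≥ -1/2`, encoded by
`q ∈ ℤ`, `q ≥ -1` with `p = q + 1/2`; and `M_n` for `n ∈ ℤ`, `n ≥ 0`. -/
inductive TIdx : Type
  | l : {m : ℤ // -1 ≤ m} → TIdx
  | y : {q : ℤ // -1 ≤ q} → TIdx
  | mm : {n : ℤ // 0 ≤ n} → TIdx
  deriving DecidableEq

/-- The underlying vector space, with basis
`{L_m : m ≥ -1} ∪ {Y_p : p ≥ -1/2} ∪ {M_n : n ≥ 0}`. -/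
abbrev TSp : Type := TIdx →₀ ℂ

/-- The basis vector `L_m` (interpreted as `0` when `m < -1`). -/
def Lgen (m : ℤ) : TSp := if h : -1 ≤ m then Finsupp.single (TIdx.l ⟨m, h⟩) 1 else 0

/-- The basis vector `Y_{q+1/2}` (interpreted as `0` when `q < -1`). -/
def Ygen (q : ℤ) : TSp := if h : -1 ≤ q then Finsupp.single (TIdx.y ⟨q, h⟩) 1 else 0

/-- The basis vector `M_n` (interpreted as `0` when `n < 0`). -/
def Mgen (n : ℤ) : TSp := if h : 0 ≤ n then Finsupp.single (TIdx.mm ⟨n, h⟩) 1 else 0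

/-- The bracket on basis elements (with `Y_p` encoded by `q = p − 1/2`):
`[L_m, L_n] = (m−n)L_{m+n}`,
`[L_m, M_n] = ((2a−3)(m+1) − n)M_{m+n} + 2b·M_{m+n+1}`,
`[L_m, Y_p] = ((a−1)(m+1) − (p+1/2))Y_{m+p} + b·Y_{m+p+1}`,
`[Y_p, Y_q] = (p−q)M_{p+q}`, `[Y_p, M_n] = [M_m, M_n] = 0`,
indices out of range understood as `0`. -/
def brT (a b : ℂ) : TIdx → TIdx → TSp
  | TIdx.l m, TIdx.l n => (((m.1 : ℂ) - (n.1 : ℂ))) • Lgen (m.1 + n.1)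
  | TIdx.l m, TIdx.mm n =>
      ((2 * a - 3) * ((m.1 : ℂ) + 1) - (n.1 : ℂ)) • Mgen (m.1 + n.1)
        + (2 * b) • Mgen (m.1 + n.1 + 1)
  | TIdx.mm n, TIdx.l m =>
      -(((2 * a - 3) * ((m.1 : ℂ) + 1) - (n.1 : ℂ)) • Mgen (m.1 + n.1)
        + (2 * b) • Mgen (m.1 + n.1 + 1))
  | TIdx.l m, TIdx.y q =>
      ((a - 1) * ((m.1 : ℂ) + 1) - ((q.1 : ℂ) + 1)) • Ygen (m.1 + q.1)
        + b • Ygen (m.1 + q.1 + 1)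
  | TIdx.y q, TIdx.l m =>
      -(((a - 1) * ((m.1 : ℂ) + 1) - ((q.1 : ℂ) + 1)) • Ygen (m.1 + q.1)
        + b • Ygen (m.1 + q.1 + 1))
  | TIdx.y p, TIdx.y q => (((p.1 : ℂ) - (q.1 : ℂ))) • Mgen (p.1 + q.1 + 1)
  | TIdx.y _, TIdx.mm _ => 0
  | TIdx.mm _, TIdx.y _ => 0
  | TIdx.mm _, TIdx.mm _ => 0

/-- The bilinear extension of the bracket to the whole space. -/
def bracketT (a b : ℂ) (x y : TSp) : TSp :=
  x.sum fun i c => y.sum fun j d => (c * d) • brT a b i j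

/-!
The bracket is bilinear and skew-symmetric on the basis, so its Leibniz identity is equivalent to
the vanishing of the Jacobiator `[x, [y, z]] + [y, [z, x]] + [z, [x, y]]`. The Jacobiator is
trilinear and invariant under cyclic rotation, hence it suffices to check it on triples of basis
vectors up to rotation. As `[Y, M] = [M, M] = 0` and `[Y, Y]` lies in the span of the `M`'s, every
term vanishes unless the triple is of type `LLL`, `LLY`, `LLM` or `LYY`; for these the identity is a
polynomial identity in the indices, `a` and `b`. An inner bracket whose index leaves the
admissible range (e.g. `[L_{-1}, L_{-1}]`) always carries a zero coefficient, so the double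
brackets obey uniform formulas.
-/

namespace LinearMap

variable {R M : Type*} [CommRing R] [AddCommGroup M] [Module R M] (B : M →ₗ[R] M →ₗ[R] M)

def jacobiator (x y z : M) : M := B x (B y z) + B y (B z x) + B z (B x y)

theorem jacobiator_rotate (x y z : M) : jacobiator B x y z = jacobiator B y z x := by
  unfold jacobiator; abel

theorem jacobiator_add_left (x x' y z : M) :
    jacobiator B (x + x') y z = jacobiator B x y z + jacobiator B x' y z := by
  simp only [jacobiator, map_add, add_apply]; abel

theorem jacobiator_smul_left (c : R) (x y z : M) :
    jacobiator B (c • x) y z = c • jacobiator B x y z := by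
  simp only [jacobiator, map_smul, smul_apply, smul_add]

theorem leibniz_of_jacobiator_eq_zero (hskew : ∀ x y, B x y = -B y x)
    (hJ : ∀ x y z, jacobiator B x y z = 0) (x y z : M) :
    B x (B y z) = B (B x y) z + B y (B x z) := by
  rw [hskew (B x y), hskew x z, map_neg, ← sub_eq_zero, ← hJ x y z, jacobiator]
  abel

section Finsupp

variable {R ι : Type*} [CommRing R] (B : (ι →₀ R) →ₗ[R] (ι →₀ R) →ₗ[R] (ι →₀ R))

theorem eq_neg_apply_swap_of_single
    (h : ∀ i j,
      B (Finsupp.single i 1) (Finsupp.single j 1) = -B (Finsupp.single j 1) (Finsupp.single i 1))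
    (x y : ι →₀ R) : B x y = -B y x := by
  have hsum : B + B.flip = 0 :=
    Finsupp.lhom_ext' fun i => ext_ring <| Finsupp.lhom_ext' fun j => ext_ring <| by
      simp [h i j]
  exact eq_neg_of_add_eq_zero_left (congrArg (fun B' => B' x y) hsum)

theorem jacobiator_eq_zero_of_single_left {y z : ι →₀ R}
    (h : ∀ i, jacobiator B (Finsupp.single i 1) y z = 0) (x : ι →₀ R) :
    jacobiator B x y z = 0 := by
  induction x using Finsupp.induction_linear with
  | zero => simp [jacobiator]
  | add x x' hx hx' => rw [jacobiator_add_left, hx, hx', add_zero]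
  | single i c => rw [← Finsupp.smul_single_one, jacobiator_smul_left, h, smul_zero]

theorem jacobiator_eq_zero_of_single
    (h : ∀ i j k, jacobiator B (Finsupp.single i 1) (Finsupp.single j 1) (Finsupp.single k 1) = 0)
    (x y z : ι →₀ R) : jacobiator B x y z = 0 :=
  jacobiator_eq_zero_of_single_left B (fun i => by
    rw [jacobiator_rotate]
    refine jacobiator_eq_zero_of_single_left B (fun j => ?_) y
    rw [jacobiator_rotate]
    refine jacobiator_eq_zero_of_single_left B (fun k => ?_) z
    rw [jacobiator_rotate]
    exact h i j k) x

end Finsupp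

end LinearMap

def bracketLin (a b : ℂ) : TSp →ₗ[ℂ] TSp →ₗ[ℂ] TSp :=
  Finsupp.linearCombination ℂ fun i => Finsupp.linearCombination ℂ (brT a b i)

section TSV

variable {a b : ℂ}

local notation "⟦" x ", " y "⟧" => bracketLin a b x y

theorem bracketLin_apply (x y : TSp) : ⟦x, y⟧ = bracketT a b x y := by
  simp [bracketLin, bracketT, Finsupp.linearCombination_apply, Finsupp.smul_sum, smul_smul]

theorem bracketLin_single (i j : TIdx) :
    ⟦Finsupp.single i 1, Finsupp.single j 1⟧ = brT a b i j := by
  simp [bracketLin]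

theorem brT_swap (i j : TIdx) : brT a b i j = -brT a b j i := by
  cases i <;> cases j <;> simp only [brT, neg_neg, neg_zero]
  case l.l m n => rw [add_comm n.1, ← neg_smul, neg_sub]
  case y.y p q => rw [add_comm q.1, ← neg_smul, neg_sub]

theorem bracketLin_swap (x y : TSp) : ⟦x, y⟧ = -⟦y, x⟧ :=
  LinearMap.eq_neg_apply_swap_of_single _
    (fun i j => by simp only [bracketLin_single, brT_swap i j]) x y

theorem Lgen_of_le {m : ℤ} (h : -1 ≤ m) : Lgen m = Finsupp.single (TIdx.l ⟨m, h⟩) 1 :=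
  dif_pos h

theorem Ygen_of_le {q : ℤ} (h : -1 ≤ q) : Ygen q = Finsupp.single (TIdx.y ⟨q, h⟩) 1 :=
  dif_pos h

theorem Mgen_of_le {n : ℤ} (h : 0 ≤ n) : Mgen n = Finsupp.single (TIdx.mm ⟨n, h⟩) 1 :=
  dif_pos h

theorem bracket_Lgen_Lgen {m n : ℤ} (hm : -1 ≤ m) (hn : -1 ≤ n) :
    ⟦Lgen m, Lgen n⟧ = ((m : ℂ) - n) • Lgen (m + n) := by
  rw [Lgen_of_le hm, Lgen_of_le hn, bracketLin_single]; rfl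

theorem bracket_Lgen_Ygen {m q : ℤ} (hm : -1 ≤ m) (hq : -1 ≤ q) :
    ⟦Lgen m, Ygen q⟧ =
      ((a - 1) * ((m : ℂ) + 1) - ((q : ℂ) + 1)) • Ygen (m + q) + b • Ygen (m + q + 1) := by
  rw [Lgen_of_le hm, Ygen_of_le hq, bracketLin_single]; rfl

theorem bracket_Lgen_Mgen {m n : ℤ} (hm : -1 ≤ m) (hn : 0 ≤ n) :
    ⟦Lgen m, Mgen n⟧ =
      ((2 * a - 3) * ((m : ℂ) + 1) - n) • Mgen (m + n) + (2 * b) • Mgen (m + n + 1) := by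
  rw [Lgen_of_le hm, Mgen_of_le hn, bracketLin_single]; rfl

theorem bracket_Ygen_Ygen {p q : ℤ} (hp : -1 ≤ p) (hq : -1 ≤ q) :
    ⟦Ygen p, Ygen q⟧ = ((p : ℂ) - q) • Mgen (p + q + 1) := by
  rw [Ygen_of_le hp, Ygen_of_le hq, bracketLin_single]; rfl

theorem bracket_Ygen_Mgen (p n : ℤ) : ⟦Ygen p, Mgen n⟧ = 0 := by
  unfold Ygen Mgen
  split_ifs <;> simp only [bracketLin_single, map_zero, LinearMap.zero_apply, brT]

theorem bracket_Mgen_Ygen (n p : ℤ) : ⟦Mgen n, Ygen p⟧ = 0 := by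
  rw [bracketLin_swap, bracket_Ygen_Mgen, neg_zero]

theorem bracket_Mgen_Mgen (m n : ℤ) : ⟦Mgen m, Mgen n⟧ = 0 := by
  unfold Mgen
  split_ifs <;> simp only [bracketLin_single, map_zero, LinearMap.zero_apply, brT]

theorem bracket_Lgen_bracket_Lgen_Lgen {m n k : ℤ} (hm : -1 ≤ m) (hn : -1 ≤ n) (hk : -1 ≤ k) :
    ⟦Lgen m, ⟦Lgen n, Lgen k⟧⟧ = (((n : ℂ) - k) * ((m : ℂ) - n - k)) • Lgen (m + n + k) := by
  rw [bracket_Lgen_Lgen hn hk, map_smul]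
  rcases (show -1 ≤ n + k ∨ n = -1 ∧ k = -1 by omega) with h | ⟨rfl, rfl⟩
  · rw [bracket_Lgen_Lgen hm h, smul_smul, ← add_assoc]
    congr 1; push_cast; ring
  · simp

theorem bracket_Ygen_bracket_Lgen_Lgen {q m n : ℤ} (hq : -1 ≤ q) (hm : -1 ≤ m) (hn : -1 ≤ n) :
    ⟦Ygen q, ⟦Lgen m, Lgen n⟧⟧ =
      -(((m : ℂ) - n) • (((a - 1) * ((m : ℂ) + n + 1) - ((q : ℂ) + 1)) • Ygen (m + n + q)
        + b • Ygen (m + n + q + 1))) := by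
  rw [bracket_Lgen_Lgen hm hn, map_smul, bracketLin_swap]
  rcases (show -1 ≤ m + n ∨ m = -1 ∧ n = -1 by omega) with h | ⟨rfl, rfl⟩
  · rw [bracket_Lgen_Ygen h hq]; push_cast; module
  · simp

theorem bracket_Mgen_bracket_Lgen_Lgen {k m n : ℤ} (hk : 0 ≤ k) (hm : -1 ≤ m) (hn : -1 ≤ n) :
    ⟦Mgen k, ⟦Lgen m, Lgen n⟧⟧ =
      -(((m : ℂ) - n) • (((2 * a - 3) * ((m : ℂ) + n + 1) - k) • Mgen (m + n + k)
        + (2 * b) • Mgen (m + n + k + 1))) := by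
  rw [bracket_Lgen_Lgen hm hn, map_smul, bracketLin_swap]
  rcases (show -1 ≤ m + n ∨ m = -1 ∧ n = -1 by omega) with h | ⟨rfl, rfl⟩
  · rw [bracket_Lgen_Mgen h hk]; push_cast; module
  · simp

theorem bracket_Lgen_bracket_Lgen_Ygen {m n q : ℤ} (hm : -1 ≤ m) (hn : -1 ≤ n) (hq : -1 ≤ q) :
    ⟦Lgen m, ⟦Lgen n, Ygen q⟧⟧ =
      ((a - 1) * ((n : ℂ) + 1) - ((q : ℂ) + 1)) •
        (((a - 1) * ((m : ℂ) + 1) - ((n : ℂ) + q + 1)) • Ygen (m + n + q)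
          + b • Ygen (m + n + q + 1))
      + b • (((a - 1) * ((m : ℂ) + 1) - ((n : ℂ) + q + 2)) • Ygen (m + n + q + 1)
          + b • Ygen (m + n + q + 2)) := by
  rw [bracket_Lgen_Ygen hn hq, map_add, map_smul, map_smul,
    bracket_Lgen_Ygen hm (by omega : -1 ≤ n + q + 1),
    show m + (n + q + 1) + 1 = m + n + q + 2 by ring]
  rcases (show -1 ≤ n + q ∨ n = -1 ∧ q = -1 by omega) with h | ⟨rfl, rfl⟩
  · rw [bracket_Lgen_Ygen hm h]; simp only [← add_assoc]; push_cast; module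
  · norm_num

theorem bracket_Lgen_bracket_Lgen_Mgen {m n k : ℤ} (hm : -1 ≤ m) (hn : -1 ≤ n) (hk : 0 ≤ k) :
    ⟦Lgen m, ⟦Lgen n, Mgen k⟧⟧ =
      ((2 * a - 3) * ((n : ℂ) + 1) - k) •
        (((2 * a - 3) * ((m : ℂ) + 1) - ((n : ℂ) + k)) • Mgen (m + n + k)
          + (2 * b) • Mgen (m + n + k + 1))
      + (2 * b) • (((2 * a - 3) * ((m : ℂ) + 1) - ((n : ℂ) + k + 1)) • Mgen (m + n + k + 1)
          + (2 * b) • Mgen (m + n + k + 2)) := by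
  rw [bracket_Lgen_Mgen hn hk, map_add, map_smul, map_smul,
    bracket_Lgen_Mgen hm (by omega : 0 ≤ n + k + 1),
    show m + (n + k + 1) + 1 = m + n + k + 2 by ring]
  rcases (show 0 ≤ n + k ∨ n = -1 ∧ k = 0 by omega) with h | ⟨rfl, rfl⟩
  · rw [bracket_Lgen_Mgen hm h]; simp only [← add_assoc]; push_cast; module
  · norm_num

theorem bracket_Lgen_bracket_Ygen_Ygen {m p q : ℤ} (hm : -1 ≤ m) (hp : -1 ≤ p) (hq : -1 ≤ q) :
    ⟦Lgen m, ⟦Ygen p, Ygen q⟧⟧ =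
      ((p : ℂ) - q) • (((2 * a - 3) * ((m : ℂ) + 1) - ((p : ℂ) + q + 1)) • Mgen (m + p + q + 1)
        + (2 * b) • Mgen (m + p + q + 2)) := by
  rw [bracket_Ygen_Ygen hp hq, map_smul]
  rcases (show 0 ≤ p + q + 1 ∨ p = -1 ∧ q = -1 by omega) with h | ⟨rfl, rfl⟩
  · rw [bracket_Lgen_Mgen hm h, show m + (p + q + 1) + 1 = m + p + q + 2 by ring]
    simp only [← add_assoc]; push_cast; module
  · simp

theorem bracket_Ygen_bracket_Lgen_Ygen {p m q : ℤ} (hp : -1 ≤ p) (hm : -1 ≤ m) (hq : -1 ≤ q) :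
    ⟦Ygen p, ⟦Lgen m, Ygen q⟧⟧ =
      ((a - 1) * ((m : ℂ) + 1) - ((q : ℂ) + 1)) • (((p : ℂ) - m - q) • Mgen (m + p + q + 1))
      + b • (((p : ℂ) - m - q - 1) • Mgen (m + p + q + 2)) := by
  rw [bracket_Lgen_Ygen hm hq, map_add, map_smul, map_smul,
    bracket_Ygen_Ygen hp (by omega : -1 ≤ m + q + 1),
    show p + (m + q + 1) + 1 = m + p + q + 2 by ring]
  rcases (show -1 ≤ m + q ∨ m = -1 ∧ q = -1 by omega) with h | ⟨rfl, rfl⟩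
  · rw [bracket_Ygen_Ygen hp h, show p + (m + q) + 1 = m + p + q + 1 by ring]; push_cast; module
  · norm_num

theorem jacobiator_Lgen_Lgen_Lgen {m n k : ℤ} (hm : -1 ≤ m) (hn : -1 ≤ n) (hk : -1 ≤ k) :
    (bracketLin a b).jacobiator (Lgen m) (Lgen n) (Lgen k) = 0 := by
  rw [LinearMap.jacobiator, bracket_Lgen_bracket_Lgen_Lgen hm hn hk,
    bracket_Lgen_bracket_Lgen_Lgen hn hk hm, bracket_Lgen_bracket_Lgen_Lgen hk hm hn,
    show n + k + m = m + n + k by ring, show k + m + n = m + n + k by ring]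
  module

theorem jacobiator_Lgen_Lgen_Ygen {m n q : ℤ} (hm : -1 ≤ m) (hn : -1 ≤ n) (hq : -1 ≤ q) :
    (bracketLin a b).jacobiator (Lgen m) (Lgen n) (Ygen q) = 0 := by
  rw [LinearMap.jacobiator, bracketLin_swap (Ygen q), map_neg,
    bracket_Lgen_bracket_Lgen_Ygen hm hn hq, bracket_Lgen_bracket_Lgen_Ygen hn hm hq,
    bracket_Ygen_bracket_Lgen_Lgen hq hm hn, show n + m + q = m + n + q by ring]
  module

theorem jacobiator_Lgen_Lgen_Mgen {m n k : ℤ} (hm : -1 ≤ m) (hn : -1 ≤ n) (hk : 0 ≤ k) :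
    (bracketLin a b).jacobiator (Lgen m) (Lgen n) (Mgen k) = 0 := by
  rw [LinearMap.jacobiator, bracketLin_swap (Mgen k), map_neg,
    bracket_Lgen_bracket_Lgen_Mgen hm hn hk, bracket_Lgen_bracket_Lgen_Mgen hn hm hk,
    bracket_Mgen_bracket_Lgen_Lgen hk hm hn, show n + m + k = m + n + k by ring]
  module

theorem jacobiator_Lgen_Ygen_Ygen {m p q : ℤ} (hm : -1 ≤ m) (hp : -1 ≤ p) (hq : -1 ≤ q) :
    (bracketLin a b).jacobiator (Lgen m) (Ygen p) (Ygen q) = 0 := by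
  rw [LinearMap.jacobiator, bracketLin_swap (Ygen q), map_neg,
    bracket_Lgen_bracket_Ygen_Ygen hm hp hq, bracket_Ygen_bracket_Lgen_Ygen hp hm hq,
    bracket_Ygen_bracket_Lgen_Ygen hq hm hp, show m + q + p = m + p + q by ring]
  module

theorem jacobiator_bracketLin_single (i j k : TIdx) :
    (bracketLin a b).jacobiator (Finsupp.single i 1) (Finsupp.single j 1)
      (Finsupp.single k 1) = 0 := by
  obtain ⟨m, hm⟩ | ⟨m, hm⟩ | ⟨m, hm⟩ := i <;> obtain ⟨n, hn⟩ | ⟨n, hn⟩ | ⟨n, hn⟩ := j <;>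
    obtain ⟨k, hk⟩ | ⟨k, hk⟩ | ⟨k, hk⟩ := k <;>
    simp only [← Lgen_of_le, ← Ygen_of_le, ← Mgen_of_le]
  case l.l.l => exact jacobiator_Lgen_Lgen_Lgen hm hn hk
  case l.l.y => exact jacobiator_Lgen_Lgen_Ygen hm hn hk
  case l.y.l => rw [← LinearMap.jacobiator_rotate]; exact jacobiator_Lgen_Lgen_Ygen hk hm hn
  case y.l.l => rw [LinearMap.jacobiator_rotate]; exact jacobiator_Lgen_Lgen_Ygen hn hk hm
  case l.l.mm => exact jacobiator_Lgen_Lgen_Mgen hm hn hk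
  case l.mm.l => rw [← LinearMap.jacobiator_rotate]; exact jacobiator_Lgen_Lgen_Mgen hk hm hn
  case mm.l.l => rw [LinearMap.jacobiator_rotate]; exact jacobiator_Lgen_Lgen_Mgen hn hk hm
  case l.y.y => exact jacobiator_Lgen_Ygen_Ygen hm hn hk
  case y.y.l => rw [← LinearMap.jacobiator_rotate]; exact jacobiator_Lgen_Ygen_Ygen hk hm hn
  case y.l.y => rw [LinearMap.jacobiator_rotate]; exact jacobiator_Lgen_Ygen_Ygen hn hk hm
  all_goals simp [LinearMap.jacobiator, bracketLin_swap (Mgen _) (Lgen _),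
    bracketLin_swap (Ygen _) (Lgen _), bracket_Lgen_Ygen, bracket_Lgen_Mgen, bracket_Ygen_Ygen,
    bracket_Ygen_Mgen, bracket_Mgen_Ygen, bracket_Mgen_Mgen, *]

end TSV

/-- the brackets of the annihilation algebra of `TSV(a,b)`
satisfy the Jacobi identity (in Leibniz form). -/
theorem stmt16 (a b : ℂ) (x y z : TSp) :
    bracketT a b x (bracketT a b y z) =
      bracketT a b (bracketT a b x y) z + bracketT a b y (bracketT a b x z) := by
  simp only [← bracketLin_apply]
  exact (bracketLin a b).leibniz_of_jacobiator_eq_zero bracketLin_swap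
    ((bracketLin a b).jacobiator_eq_zero_of_single jacobiator_bracketLin_single) x y z

end
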